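/- arXiv:1810.12444 — 4 statements merged into one kernel-verified Lean document; each statement's English description precedes it below -/
import Mathlib

section
/- For all d ≥ 1, k ≥ 2 and n ≥ 0, the inclusion map M_d^{(k)}(n) ↪ M_d^{(k+1)}(n) of non-k-equal into non-(k+1)-equal configuration spaces is null-homotopic. -/
/-- The non-`k`-equal configuration space of `n` labeled points in `ℝ^d`. -/
def nonKEqual (d k n : ℕ) : Set (Fin n → EuclideanSpace ℝ (Fin d)) :=
  {x | ∀ S : Finset (Fin n), S.card = k → ∃ i ∈ S, ∃ j ∈ S, x i ≠ x j}

namespace Stmt3Aux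

/-- `1 + ` the sum of the norms of the points: a bound strictly above every norm. -/
noncomputable def mfun {d n : ℕ} (x : Fin n → EuclideanSpace ℝ (Fin d)) : ℝ :=
  1 + ∑ j, ‖x j‖

lemma norm_lt_mfun {d n : ℕ} (x : Fin n → EuclideanSpace ℝ (Fin d)) (j : Fin n) :
    ‖x j‖ < mfun x := by
  have h1 : ‖x j‖ ≤ ∑ j, ‖x j‖ :=
    Finset.single_le_sum (fun i _ => norm_nonneg (x i)) (Finset.mem_univ j)
  have : (0:ℝ) < 1 := one_pos
  unfold mfun; linarith

lemma mfun_pos {d n : ℕ} (x : Fin n → EuclideanSpace ℝ (Fin d)) : 0 < mfun x := by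
  have : (0:ℝ) ≤ ∑ j, ‖x j‖ := Finset.sum_nonneg fun i _ => norm_nonneg (x i)
  unfold mfun; linarith

/-- Time schedule: point `i` moves during `t ∈ [i/(n+1), (i+1)/(n+1)]`. -/
noncomputable def sfun (n i : ℕ) (t : ℝ) : ℝ := max 0 (min 1 (t * (n + 1) - i))

lemma sfun_nonneg (n i : ℕ) (t : ℝ) : 0 ≤ sfun n i t := le_max_left _ _

lemma sfun_le_one (n i : ℕ) (t : ℝ) : sfun n i t ≤ 1 :=
  max_le zero_le_one (min_le_left _ _)

lemma sfun_at_zero (n i : ℕ) : sfun n i 0 = 0 := by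
  unfold sfun
  have hi : (0:ℝ) ≤ (i:ℝ) := Nat.cast_nonneg i
  have h0 : ((0:ℝ) * (n+1) - i) ≤ 0 := by nlinarith
  have : min 1 ((0:ℝ) * (n+1) - i) ≤ 0 := le_trans (min_le_right _ _) h0
  exact max_eq_left this

lemma sfun_at_one (n i : ℕ) (hi : i ≤ n) : sfun n i 1 = 1 := by
  unfold sfun
  have h1 : (1:ℝ) ≤ 1 * (n+1) - i := by
    have : (i:ℝ) ≤ n := by exact_mod_cast hi
    linarith
  rw [min_eq_left h1]
  exact max_eq_right zero_le_one

lemma sfun_eq_one (n i : ℕ) (t : ℝ) (h : (i:ℝ) + 1 ≤ t * (n+1)) : sfun n i t = 1 := by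
  unfold sfun
  rw [min_eq_left (by linarith)]
  exact max_eq_right zero_le_one

lemma sfun_pos_lt (n i : ℕ) (t : ℝ) (h0 : 0 < sfun n i t) (h1 : sfun n i t < 1) :
    (i:ℝ) < t * (n+1) ∧ t * (n+1) < (i:ℝ) + 1 := by
  unfold sfun at h0 h1
  constructor
  · by_contra hc
    push_neg at hc
    have : min 1 (t * (n+1) - i) ≤ 0 := le_trans (min_le_right _ _) (by linarith)
    rw [max_eq_left this] at h0; exact lt_irrefl _ h0
  · by_contra hc
    push_neg at hc
    have : min 1 (t * (n+1) - i) = 1 := min_eq_left (by linarith)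
    rw [this, max_eq_right zero_le_one] at h1
    exact lt_irrefl _ h1

/-- At most one point can be in mid-motion at any time. -/
lemma moving_unique (n i j : ℕ) (t : ℝ)
    (hi0 : 0 < sfun n i t) (hi1 : sfun n i t < 1)
    (hj0 : 0 < sfun n j t) (hj1 : sfun n j t < 1) : i = j := by
  obtain ⟨a1, a2⟩ := sfun_pos_lt n i t hi0 hi1
  obtain ⟨b1, b2⟩ := sfun_pos_lt n j t hj0 hj1
  have h1 : (i:ℝ) < (j:ℝ) + 1 := lt_trans a1 b2
  have h2 : (j:ℝ) < (i:ℝ) + 1 := lt_trans b1 a2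
  have h1' : i < j + 1 := by exact_mod_cast h1
  have h2' : j < i + 1 := by exact_mod_cast h2
  omega

lemma sfun_last (n : ℕ) (t : ℝ) (h : 0 < sfun n n t) (i : ℕ) (hi : i < n) :
    sfun n i t = 1 := by
  have hn : (n:ℝ) < t * (n+1) := by
    by_contra hc
    push_neg at hc
    have : min 1 (t * (n+1) - n) ≤ 0 := le_trans (min_le_right _ _) (by linarith)
    unfold sfun at h
    rw [max_eq_left this] at h; exact lt_irrefl _ h
  apply sfun_eq_one
  have : (i:ℝ) + 1 ≤ n := by exact_mod_cast hi
  linarith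

noncomputable def e1 (d : ℕ) (hd : 1 ≤ d) : EuclideanSpace ℝ (Fin d) :=
  EuclideanSpace.single ⟨0, hd⟩ (1 : ℝ)

lemma norm_e1 (d : ℕ) (hd : 1 ≤ d) : ‖e1 d hd‖ = 1 := by
  simp [e1, EuclideanSpace.norm_single]

lemma e1_ne_zero (d : ℕ) (hd : 1 ≤ d) : e1 d hd ≠ 0 := by
  intro hc
  have := norm_e1 d hd
  rw [hc, norm_zero] at this
  norm_num at this

lemma e1_coeff_inj {d : ℕ} (hd : 1 ≤ d) {a b : ℝ} (h : a • e1 d hd = b • e1 d hd) :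
    a = b := smul_left_injective ℝ (e1_ne_zero d hd) h

/-- Position of point `i` at time `t` of the homotopy. -/
noncomputable def pos {d n : ℕ} (hd : 1 ≤ d) (x : Fin n → EuclideanSpace ℝ (Fin d))
    (t : ℝ) (i : Fin n) : EuclideanSpace ℝ (Fin d) :=
  (1 - sfun n i t) • x i +
    sfun n i t • ((mfun x * (1 - sfun n n t) + (i:ℕ)) • e1 d hd)

lemma pos_of_pending {d n : ℕ} (hd : 1 ≤ d) (x : Fin n → EuclideanSpace ℝ (Fin d))
    (t : ℝ) (i : Fin n) (h : sfun n (i:ℕ) t = 0) : pos hd x t i = x i := by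
  simp [pos, h]

lemma pos_of_done {d n : ℕ} (hd : 1 ≤ d) (x : Fin n → EuclideanSpace ℝ (Fin d))
    (t : ℝ) (i : Fin n) (h : sfun n (i:ℕ) t = 1) :
    pos hd x t i = (mfun x * (1 - sfun n n t) + (i:ℕ)) • e1 d hd := by
  simp [pos, h]

/-- Key lemma: the homotopy stays inside the non-`(k+1)`-equal space. -/
lemma pos_mem {d k n : ℕ} (hd : 1 ≤ d) (hk : 2 ≤ k)
    {x : Fin n → EuclideanSpace ℝ (Fin d)} (hx : x ∈ nonKEqual d k n) (t : ℝ) :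
    (fun i => pos hd x t i) ∈ nonKEqual d (k + 1) n := by
  classical
  intro S hS
  by_contra hcon
  push_neg at hcon
  -- hcon : all positions indexed by S coincide
  have hcard2 : 1 < S.card := by omega
  rcases lt_or_eq_of_le (sfun_nonneg n n t) with hσ | hσ
  · -- Final translation stage: all points are done, at distinct positions.
    obtain ⟨a, ha, b, hb, hab⟩ := Finset.one_lt_card.mp hcard2
    have ha1 : sfun n (a:ℕ) t = 1 := sfun_last n t hσ _ a.isLt
    have hb1 : sfun n (b:ℕ) t = 1 := sfun_last n t hσ _ b.isLt
    have heq := hcon a ha b hb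
    rw [pos_of_done hd x t a ha1, pos_of_done hd x t b hb1] at heq
    have := e1_coeff_inj hd heq
    have : ((a:ℕ):ℝ) = ((b:ℕ):ℝ) := by linarith
    exact hab (Fin.ext (by exact_mod_cast this))
  · -- sfun n n t = 0
    have hσ0 : sfun n n t = 0 := hσ.symm
    by_cases hdone : ∃ i ∈ S, sfun n (i:ℕ) t = 1
    · obtain ⟨i, hiS, hi1⟩ := hdone
      have hposi : pos hd x t i = (mfun x + (i:ℕ)) • e1 d hd := by
        rw [pos_of_done hd x t i hi1, hσ0]; ring_nf
      -- no pending point can coincide with a done point (norm too small)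
      have hnopend : ∀ j ∈ S, sfun n (j:ℕ) t ≠ 0 := by
        intro j hjS hj0 
        have heq := hcon j hjS i hiS
        rw [pos_of_pending hd x t j hj0, hposi] at heq
        have hnorm : ‖x j‖ = ‖(mfun x + (i:ℕ)) • e1 d hd‖ := by rw [heq]
        rw [norm_smul, norm_e1, mul_one, Real.norm_eq_abs] at hnorm
        have h1 : mfun x ≤ mfun x + (i:ℕ) := by
          have : (0:ℝ) ≤ ((i:ℕ):ℝ) := Nat.cast_nonneg _
          linarith
        have h2 : (0:ℝ) ≤ mfun x + (i:ℕ) := le_trans (le_of_lt (mfun_pos x)) h1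
        rw [abs_of_nonneg h2] at hnorm
        have := norm_lt_mfun x j
        linarith
      -- any done point in S equals i
      have hdone_eq : ∀ j ∈ S, sfun n (j:ℕ) t = 1 → j = i := by
        intro j hjS hj1
        have heq := hcon j hjS i hiS
        rw [pos_of_done hd x t j hj1, hσ0, hposi] at heq
        have heq' : (mfun x * (1 - 0) + (j:ℕ)) = (mfun x + (i:ℕ)) := e1_coeff_inj hd heq
        have : ((j:ℕ):ℝ) = ((i:ℕ):ℝ) := by linarith
        exact Fin.ext (by exact_mod_cast this)
      -- everything in S \ {i} is mid-motion, and mid-motion is unique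
      have hcard3 : 1 < (S.erase i).card := by
        rw [Finset.card_erase_of_mem hiS, hS]; omega
      obtain ⟨a, ha, b, hb, hab⟩ := Finset.one_lt_card.mp hcard3
      have hmov : ∀ j ∈ S.erase i, 0 < sfun n (j:ℕ) t ∧ sfun n (j:ℕ) t < 1 := by
        intro j hj
        obtain ⟨hjne, hjS⟩ := Finset.mem_erase.mp hj
        refine ⟨lt_of_le_of_ne (sfun_nonneg _ _ _) (Ne.symm (hnopend j hjS)), ?_⟩
        exact lt_of_le_of_ne (sfun_le_one _ _ _) (fun hc => hjne (hdone_eq j hjS hc))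
      obtain ⟨ha0, ha1⟩ := hmov a ha
      obtain ⟨hb0, hb1⟩ := hmov b hb
      exact hab (Fin.ext (moving_unique n _ _ t ha0 ha1 hb0 hb1))
    · -- no done point: at most one mid-motion point, so ≥ k pending points coincide
      push_neg at hdone
      set T := S.filter (fun i : Fin n => sfun n (i:ℕ) t = 0) with hT
      have hTsub : T ⊆ S := Finset.filter_subset _ _
      have hsd : (S \ T).card ≤ 1 := by
        apply Finset.card_le_one.mpr
        intro a ha b hb
        obtain ⟨haS, haT⟩ := Finset.mem_sdiff.mp ha
        obtain ⟨hbS, hbT⟩ := Finset.mem_sdiff.mp hb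
        have ha0 : sfun n (a:ℕ) t ≠ 0 := by
          intro hc; exact haT (Finset.mem_filter.mpr ⟨haS, hc⟩)
        have hb0 : sfun n (b:ℕ) t ≠ 0 := by
          intro hc; exact hbT (Finset.mem_filter.mpr ⟨hbS, hc⟩)
        have ha0' : 0 < sfun n (a:ℕ) t := lt_of_le_of_ne (sfun_nonneg _ _ _) (Ne.symm ha0)
        have hb0' : 0 < sfun n (b:ℕ) t := lt_of_le_of_ne (sfun_nonneg _ _ _) (Ne.symm hb0)
        have ha1 : sfun n (a:ℕ) t < 1 :=
          lt_of_le_of_ne (sfun_le_one _ _ _) (hdone a haS)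
        have hb1 : sfun n (b:ℕ) t < 1 :=
          lt_of_le_of_ne (sfun_le_one _ _ _) (hdone b hbS)
        exact Fin.ext (moving_unique n _ _ t ha0' ha1 hb0' hb1)
      have hTcard : k ≤ T.card := by
        have := Finset.card_sdiff_add_card_eq_card hTsub
        omega
      obtain ⟨T', hT'sub, hT'card⟩ := Finset.exists_subset_card_eq hTcard
      obtain ⟨a, ha, b, hb, hxab⟩ := hx T' hT'card
      have haT : a ∈ T := hT'sub ha
      have hbT : b ∈ T := hT'sub hb
      have ha0 : sfun n (a:ℕ) t = 0 := (Finset.mem_filter.mp haT).2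
      have hb0 : sfun n (b:ℕ) t = 0 := (Finset.mem_filter.mp hbT).2
      have heq := hcon a (hTsub haT) b (hTsub hbT)
      rw [pos_of_pending hd x t a ha0, pos_of_pending hd x t b hb0] at heq
      exact hxab heq

lemma const_mem {d k n : ℕ} (hd : 1 ≤ d) (hk : 2 ≤ k) :
    (fun i : Fin n => ((i:ℕ):ℝ) • e1 d hd) ∈ nonKEqual d (k + 1) n := by
  intro S hS
  by_contra hcon
  push_neg at hcon
  have hcard2 : 1 < S.card := by omega
  obtain ⟨a, ha, b, hb, hab⟩ := Finset.one_lt_card.mp hcard2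
  have heq := hcon a ha b hb
  have : (((a:ℕ)):ℝ) = ((b:ℕ):ℝ) := e1_coeff_inj hd heq
  exact hab (Fin.ext (by exact_mod_cast this))

lemma pos_continuous {d n : ℕ} (hd : 1 ≤ d) :
    Continuous (fun p : (Fin n → EuclideanSpace ℝ (Fin d)) × ℝ =>
      fun i : Fin n => pos hd p.1 p.2 i) := by
  apply continuous_pi
  intro i
  unfold pos sfun mfun
  have hx : ∀ j : Fin n, Continuous
      (fun p : (Fin n → EuclideanSpace ℝ (Fin d)) × ℝ => p.1 j) :=
    fun j => (continuous_apply j).comp continuous_fst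
  have hm : Continuous (fun p : (Fin n → EuclideanSpace ℝ (Fin d)) × ℝ =>
      (1:ℝ) + ∑ j, ‖p.1 j‖) := by
    apply continuous_const.add
    exact continuous_finset_sum _ fun j _ => (hx j).norm
  have hs : ∀ m : ℕ, Continuous (fun p : (Fin n → EuclideanSpace ℝ (Fin d)) × ℝ =>
      max 0 (min 1 (p.2 * (n+1) - m))) := by
    intro m
    apply continuous_const.max
    apply continuous_const.min
    exact (continuous_snd.mul continuous_const).sub continuous_const
  apply Continuous.add
  · exact (continuous_const.sub (hs i)).smul (hx i)
  · exact (hs i).smul (((hm.mul (continuous_const.sub (hs n))).add continuous_const).smul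
      continuous_const)

end Stmt3Aux

open Stmt3Aux in
/-- the inclusion `M_d^{(k)}(n) ↪ M_d^{(k+1)}(n)` is null-homotopic. -/
theorem stmt_3 (d k n : ℕ) (hd : 1 ≤ d) (hk : 2 ≤ k)
    (h : nonKEqual d k n ⊆ nonKEqual d (k + 1) n) :
    (⟨Set.inclusion h, continuous_inclusion h⟩ :
      C(nonKEqual d k n, nonKEqual d (k + 1) n)).Nullhomotopic := by
  refine ⟨⟨fun i : Fin n => ((i:ℕ):ℝ) • e1 d hd, const_mem hd hk⟩, ?_⟩
  constructor
  refine
    { toFun := fun p =>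
        ⟨fun i => pos hd (p.2 : Fin n → EuclideanSpace ℝ (Fin d)) (p.1 : ℝ) i,
          pos_mem hd hk p.2.2 (p.1 : ℝ)⟩
      continuous_toFun := ?_
      map_zero_left := ?_
      map_one_left := ?_ }
  · apply Continuous.subtype_mk
    exact (pos_continuous hd).comp
      ((continuous_subtype_val.comp continuous_snd).prodMk
        (continuous_subtype_val.comp continuous_fst))
  · intro x
    apply Subtype.ext
    funext i
    simp only [ContinuousMap.coe_mk, Set.inclusion_mk]
    show pos hd (x : Fin n → EuclideanSpace ℝ (Fin d)) ((0:unitInterval):ℝ) i = _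
    rw [show ((0:unitInterval):ℝ) = 0 from rfl, pos_of_pending hd _ 0 i (sfun_at_zero n i)]
  · intro x
    apply Subtype.ext
    funext i
    show pos hd (x : Fin n → EuclideanSpace ℝ (Fin d)) ((1:unitInterval):ℝ) i = _
    rw [show ((1:unitInterval):ℝ) = 1 from rfl,
      pos_of_done hd _ 1 i (sfun_at_one n i (le_of_lt i.isLt)),
      sfun_at_one n n le_rfl]
    simp
end

section
/- For all d ≥ 1, k ≥ 2, n ≥ 1 and every homology degree q > 0, the map H_q(M_d^{(k)}(n)) → H_q(M_d^{(k+1)}(n)) induced by the inclusion is the zero map. -/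
open CategoryTheory

/-!
The inclusion `M_d^{(k)}(n) ↪ M_d^{(k+1)}(n)` is null-homotopic. Fix a unit vector `e`. One
point after another, the point `x i` slides along a segment to its parking spot
`r (i + 1) • e` with `r = ‖x‖ + 1`; afterwards the scale `r` shrinks to `1`, reaching a
constant configuration. During the sliding at most one point is in transit, and parked points
are pairwise distinct and lie farther out than every waiting point. So `k + 1` coinciding
points either include a waiting point, hence no parked one and at least `k` waiting ones,
which is a `k`-fold coincidence of `x`; or they are parked or in transit, hence at most two of
them, while `k + 1 ≥ 3`.
-/

open Function

noncomputable section

lemma homotopic_of_forall_mem {X Z : Type*} [TopologicalSpace X] [TopologicalSpace Z]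
    {s : Set Z} {f g : C(X, s)} (F : unitInterval × X → Z) (hF : Continuous F)
    (hmem : ∀ p, F p ∈ s) (h0 : ∀ x, F (0, x) = f x) (h1 : ∀ x, F (1, x) = g x) :
    f.Homotopic g :=
  ⟨{ toFun p := ⟨F p, hmem p⟩
     continuous_toFun := hF.subtype_mk hmem
     map_zero_left x := Subtype.ext (h0 x)
     map_one_left x := Subtype.ext (h1 x) }⟩

section Parking

variable {E : Type*} [NormedAddCommGroup E] [NormedSpace ℝ E] {n : ℕ}

def parking (e : E) (r : ℝ) (i : Fin n) : E := (r * ((i : ℕ) + 1)) • e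

lemma parking_injective {e : E} (he : e ≠ 0) {r : ℝ} (hr : r ≠ 0) :
    Injective (parking (n := n) e r) := by
  intro i j hij
  have := smul_left_injective ℝ he hij
  simp only [mul_right_inj' hr, add_left_inj, Nat.cast_inj] at this
  exact Fin.ext this

lemma norm_parking {e : E} (he : ‖e‖ = 1) {r : ℝ} (hr : 0 ≤ r) (i : Fin n) :
    ‖parking e r i‖ = r * ((i : ℕ) + 1) := by
  rw [parking, norm_smul, he, mul_one, Real.norm_of_nonneg (by positivity)]

lemma norm_lt_norm_parking {e : E} (he : ‖e‖ = 1) (x : Fin n → E) (i j : Fin n) :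
    ‖x i‖ < ‖parking e (‖x‖ + 1) j‖ := by
  rw [norm_parking he (by positivity)]
  have : (1 : ℝ) ≤ (j : ℕ) + 1 := by simp
  nlinarith [norm_le_pi_norm x i, norm_nonneg x]

lemma continuous_parking (e : E) (i : Fin n) : Continuous fun r : ℝ => parking e r i := by
  unfold parking; fun_prop

/-- Point `i` is in transit exactly for `t ∈ (i / n, (i + 1) / n)`. -/
def clock (n : ℕ) (t : ℝ) (i : Fin n) : ℝ := max 0 (min 1 (n * t - i))

lemma clock_zero (i : Fin n) : clock n 0 i = 0 := by
  simp [clock]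

lemma clock_one (i : Fin n) : clock n 1 i = 1 := by
  have : (i : ℝ) + 1 ≤ n := by exact_mod_cast i.isLt
  simp [clock, min_eq_left (by linarith : (1 : ℝ) ≤ n - i)]

lemma continuous_clock (i : Fin n) : Continuous fun t => clock n t i := by
  unfold clock; fun_prop

lemma subsingleton_clock_moving (t : ℝ) :
    {i : Fin n | clock n t i ≠ 0 ∧ clock n t i ≠ 1}.Subsingleton := by
  have window {i : Fin n} (h0 : clock n t i ≠ 0) (h1 : clock n t i ≠ 1) :
      (i : ℝ) < n * t ∧ n * t < i + 1 := by
    constructor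
    · by_contra! h
      exact h0 (max_eq_left (min_le_of_right_le (by linarith)))
    · by_contra! h
      exact h1 (by rw [clock, min_eq_left (by linarith)]; norm_num)
  rintro i ⟨hi0, hi1⟩ j ⟨hj0, hj1⟩
  obtain ⟨hi, hi'⟩ := window hi0 hi1
  obtain ⟨hj, hj'⟩ := window hj0 hj1
  have : (i : ℕ) < j + 1 := by exact_mod_cast hi.trans hj'
  have : (j : ℕ) < i + 1 := by exact_mod_cast hj.trans hi'
  exact Fin.ext (by omega)

def sweep (e : E) (x : Fin n → E) (t : ℝ) (i : Fin n) : E :=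
  (1 - clock n t i) • x i + clock n t i • parking e (‖x‖ + 1) i

lemma sweep_zero (e : E) (x : Fin n → E) : sweep e x 0 = x := by
  ext1 i; simp [sweep, clock_zero]

lemma sweep_one (e : E) (x : Fin n → E) : sweep e x 1 = parking e (‖x‖ + 1) := by
  ext1 i; simp [sweep, clock_one]

lemma continuous_sweep (e : E) :
    Continuous fun p : ℝ × (Fin n → E) => sweep e p.2 p.1 := by
  refine continuous_pi fun i => ?_
  have hc : Continuous fun p : ℝ × (Fin n → E) => clock n p.1 i :=
    (continuous_clock i).comp continuous_fst
  have hp : Continuous fun p : ℝ × (Fin n → E) => parking e (‖p.2‖ + 1) i :=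
    (continuous_parking e i).comp ((continuous_norm.comp continuous_snd).add continuous_const)
  unfold sweep
  exact ((continuous_const.sub hc).smul ((continuous_apply i).comp continuous_snd)).add
    (hc.smul hp)

end Parking

section NonKEqual

variable {d k n : ℕ}

lemma mem_nonKEqual_of_injective (hk : 2 ≤ k) {y : Fin n → EuclideanSpace ℝ (Fin d)}
    (hy : Injective y) : y ∈ nonKEqual d k n := by
  intro S hS
  obtain ⟨i, hi, j, hj, hij⟩ := Finset.one_lt_card.1 (by omega : 1 < S.card)
  exact ⟨i, hi, j, hj, hy.ne hij⟩

lemma mem_nonKEqual_succ_of_waiting_parked (hk : 2 ≤ k)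
    {x y : Fin n → EuclideanSpace ℝ (Fin d)} (hx : x ∈ nonKEqual d k n) (W P : Set (Fin n))
    (hW : ∀ i ∈ W, y i = x i) (hP : P.InjOn y) (hWP : ∀ i ∈ W, ∀ j ∈ P, y i ≠ y j)
    (hmove : {i | i ∉ W ∧ i ∉ P}.Subsingleton) : y ∈ nonKEqual d (k + 1) n := by
  classical
  intro S hS
  by_contra! hSy
  by_cases hSW : ∃ j ∈ S, j ∈ W
  · obtain ⟨j, hjS, hjW⟩ := hSW
    have hSP (a : Fin n) (ha : a ∈ S) : a ∉ P := fun haP => hWP j hjW a haP (hSy j hjS a ha)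
    have hnotW : (S.filter (· ∉ W)).card ≤ 1 := by
      refine Finset.card_le_one.2 fun a ha b hb => ?_
      rw [Finset.mem_filter] at ha hb
      exact hmove ⟨ha.2, hSP a ha.1⟩ ⟨hb.2, hSP b hb.1⟩
    have := Finset.card_filter_add_card_filter_not (s := S) (· ∈ W)
    obtain ⟨T, hTS, hT⟩ :=
      Finset.exists_subset_card_eq (by omega : k ≤ (S.filter (· ∈ W)).card)
    obtain ⟨a, ha, b, hb, hab⟩ := hx T hT
    obtain ⟨haS, haW⟩ := Finset.mem_filter.1 (hTS ha)
    obtain ⟨hbS, hbW⟩ := Finset.mem_filter.1 (hTS hb)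
    exact hab (by rw [← hW a haW, ← hW b hbW]; exact hSy a haS b hbS)
  · push Not at hSW
    have hP1 : (S.filter (· ∈ P)).card ≤ 1 := by
      refine Finset.card_le_one.2 fun a ha b hb => ?_
      rw [Finset.mem_filter] at ha hb
      exact hP ha.2 hb.2 (hSy a ha.1 b hb.1)
    have hM1 : (S.filter (· ∉ P)).card ≤ 1 := by
      refine Finset.card_le_one.2 fun a ha b hb => ?_
      rw [Finset.mem_filter] at ha hb
      exact hmove ⟨hSW a ha.1, ha.2⟩ ⟨hSW b hb.1, hb.2⟩
    have := Finset.card_filter_add_card_filter_not (s := S) (· ∈ P)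
    omega

end NonKEqual

section NullHomotopy

variable {d k n : ℕ} {e : EuclideanSpace ℝ (Fin d)}

lemma sweep_mem_nonKEqual (he : ‖e‖ = 1) (hk : 2 ≤ k)
    {x : Fin n → EuclideanSpace ℝ (Fin d)} (hx : x ∈ nonKEqual d k n) (t : ℝ) :
    sweep e x t ∈ nonKEqual d (k + 1) n := by
  refine mem_nonKEqual_succ_of_waiting_parked hk hx {i | clock n t i = 0} {i | clock n t i = 1}
    (fun i (hi : clock n t i = 0) => ?_)
    (fun i (hi : clock n t i = 1) j (hj : clock n t j = 1) hij => ?_)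
    (fun i (hi : clock n t i = 0) j (hj : clock n t j = 1) hij => ?_)
    (subsingleton_clock_moving t)
  · simp [sweep, hi]
  · refine parking_injective (r := ‖x‖ + 1) (norm_ne_zero_iff.1 (he ▸ one_ne_zero))
      (by positivity) ?_
    simpa [sweep, hi, hj] using hij
  · simp only [sweep, hi, hj, sub_zero, one_smul, zero_smul, add_zero, sub_self, zero_add] at hij
    exact (norm_lt_norm_parking he x i j).ne (congrArg norm hij)

def farParking (he : e ≠ 0) (hk : 2 ≤ k) (s : Set (Fin n → EuclideanSpace ℝ (Fin d))) :
    C(s, nonKEqual d k n) where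
  toFun x := ⟨parking e (‖(x : Fin n → EuclideanSpace ℝ (Fin d))‖ + 1),
    mem_nonKEqual_of_injective hk (parking_injective he (by positivity))⟩
  continuous_toFun := by
    refine Continuous.subtype_mk (continuous_pi fun i => ?_) _
    exact (continuous_parking e i).comp
      ((continuous_norm.comp continuous_subtype_val).add continuous_const)

lemma inclusion_homotopic_farParking (he : ‖e‖ = 1) (hk : 2 ≤ k)
    (h : nonKEqual d k n ⊆ nonKEqual d (k + 1) n) :
    (ContinuousMap.inclusion h).Homotopic
      (farParking (norm_ne_zero_iff.1 (he ▸ one_ne_zero)) (by omega) _) :=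
  homotopic_of_forall_mem (fun p => sweep e p.2.1 p.1)
    ((continuous_sweep e).comp (continuous_subtype_val.prodMap continuous_subtype_val))
    (fun p => sweep_mem_nonKEqual he hk p.2.2 p.1)
    (fun x => sweep_zero e x.1) (fun x => sweep_one e x.1)

lemma farParking_homotopic_const (he : e ≠ 0) (hk : 2 ≤ k)
    (s : Set (Fin n → EuclideanSpace ℝ (Fin d))) :
    ∃ c, (farParking he hk s).Homotopic (ContinuousMap.const _ c) := by
  have hscale (t : unitInterval) (r : ℝ) (hr : 0 ≤ r) : 1 ≤ (1 - t) * (r + 1) + t := by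
    nlinarith [t.2.1, t.2.2]
  refine ⟨⟨parking e 1, mem_nonKEqual_of_injective hk (parking_injective he one_ne_zero)⟩,
    homotopic_of_forall_mem
      (fun p : unitInterval × s => parking e ((1 - p.1) * (‖p.2.1‖ + 1) + p.1))
      ?_ (fun p => mem_nonKEqual_of_injective hk (parking_injective he ?_))
      (fun x => by simp [farParking]) (fun x => by simp)⟩
  · refine continuous_pi fun i => (continuous_parking e i).comp ?_
    fun_prop
  · exact (zero_lt_one.trans_le (hscale p.1 _ (norm_nonneg _))).ne'

lemma inclusion_homotopic_const (he : ‖e‖ = 1) (hk : 2 ≤ k)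
    (h : nonKEqual d k n ⊆ nonKEqual d (k + 1) n) :
    ∃ c, (ContinuousMap.inclusion h).Homotopic (ContinuousMap.const _ c) :=
  have ⟨c, hc⟩ := farParking_homotopic_const _ _ _
  ⟨c, (inclusion_homotopic_farParking he hk h).trans hc⟩

end NullHomotopy

theorem stmt_4_general (d k n : ℕ) (hd : 1 ≤ d) (hk : 2 ≤ k)
    (H : ℕ → TopCat.{0} ⥤ AddCommGrpCat.{0}) (q : ℕ)
    (hhtpy : ∀ (X Y : TopCat) (f g : X ⟶ Y),
      ContinuousMap.Homotopic f.hom g.hom → (H q).map f = (H q).map g)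
    (hconst : ∀ (X Y : TopCat) (f : X ⟶ Y), (∃ y, ∀ x, f x = y) → (H q).map f = 0)
    (h : nonKEqual d k n ⊆ nonKEqual d (k + 1) n) :
    (H q).map (show TopCat.of (nonKEqual d k n) ⟶ TopCat.of (nonKEqual d (k + 1) n) from
        TopCat.ofHom ⟨Set.inclusion h, continuous_inclusion h⟩) = 0 := by
  obtain ⟨c, hc⟩ :=
    inclusion_homotopic_const (e := EuclideanSpace.single ⟨0, hd⟩ 1) (by simp) hk h
  exact (hhtpy _ _ _ (TopCat.ofHom (ContinuousMap.const _ c)) hc).trans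
    (hconst _ _ _ ⟨c, fun _ => rfl⟩)

/-- for every `q > 0` the inclusion `M_d^{(k)}(n) ↪ M_d^{(k+1)}(n)` induces
the zero map on `q`-th homology.  Homology in positive degrees is modelled abstractly:
`H q` is any homotopy-invariant functor `TopCat ⥤ AddCommGrp` (for each degree `q > 0`)
sending constant maps to the zero morphism. -/
theorem stmt_4 (d k n : ℕ) (hd : 1 ≤ d) (hk : 2 ≤ k) (hn : 1 ≤ n)
    (H : ℕ → TopCat.{0} ⥤ AddCommGrpCat.{0}) (q : ℕ) (hq : 0 < q)
    (hhtpy : ∀ (X Y : TopCat) (f g : X ⟶ Y),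
      ContinuousMap.Homotopic f.hom g.hom → (H q).map f = (H q).map g)
    (hconst : ∀ (X Y : TopCat) (f : X ⟶ Y), (∃ y, ∀ x, f x = y) → (H q).map f = 0)
    (h : nonKEqual d k n ⊆ nonKEqual d (k + 1) n) :
    (H q).map (show TopCat.of (nonKEqual d k n) ⟶ TopCat.of (nonKEqual d (k + 1) n) from
        TopCat.ofHom ⟨Set.inclusion h, continuous_inclusion h⟩) = 0 :=
  stmt_4_general d k n hd hk H q hhtpy hconst h
end
end

section
/- Let configurations of n₂ discs satisfying the non-k₂-overlapping condition be inserted into the i-th disc of a configuration of n₁ discs satisfying the non-k₁-overlapping condition (each inner disc mapped by the translation-and-rescaling taking the unit disc onto disc i). Then the resulting configuration of n₁ + n₂ − 1 discs satisfies the non-(k₁ + k₂ − 1)-overlapping condition; in particular any point of ℝ^d lies in at most k₁ + k₂ − 2 of the resulting discs. -/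
/-- Operadic composition of a non-`k₁`-overlapping configuration of `n₁` discs
with a non-`k₂`-overlapping configuration of `n₂` discs inserted into the `i`-th disc yields a
non-`(k₁+k₂-1)`-overlapping configuration: every point of `ℝ^d` lies in at most `k₁+k₂-2` of
the resulting discs. Discs are given by centers and radii; the overlap condition says that each
point lies in at most `k-1` of the open balls. -/
theorem stmt_7 (d n₁ n₂ k₁ k₂ : ℕ) (hd : 1 ≤ d) (hk₁ : 2 ≤ k₁) (hk₂ : 2 ≤ k₂) (i : Fin n₁)
    (c₁ : Fin n₁ → EuclideanSpace ℝ (Fin d)) (r₁ : Fin n₁ → ℝ)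
    (c₂ : Fin n₂ → EuclideanSpace ℝ (Fin d)) (r₂ : Fin n₂ → ℝ)
    (hr₁ : ∀ j, 0 < r₁ j) (hr₂ : ∀ j, 0 < r₂ j)
    (hin₁ : ∀ j, Metric.ball (c₁ j) (r₁ j) ⊆ Metric.ball 0 1)
    (hin₂ : ∀ j, Metric.ball (c₂ j) (r₂ j) ⊆ Metric.ball 0 1)
    (hov₁ : ∀ p : EuclideanSpace ℝ (Fin d),
      Set.ncard {j | p ∈ Metric.ball (c₁ j) (r₁ j)} ≤ k₁ - 1)
    (hov₂ : ∀ p : EuclideanSpace ℝ (Fin d),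
      Set.ncard {j | p ∈ Metric.ball (c₂ j) (r₂ j)} ≤ k₂ - 1) :
    ∀ p : EuclideanSpace ℝ (Fin d),
      Set.ncard {q : {j : Fin n₁ // j ≠ i} ⊕ Fin n₂ |
        p ∈ Sum.elim (fun j : {j : Fin n₁ // j ≠ i} => Metric.ball (c₁ j.1) (r₁ j.1))
          (fun j : Fin n₂ => Metric.ball (c₁ i + r₁ i • c₂ j) (r₁ i * r₂ j)) q}
      ≤ k₁ + k₂ - 2 := by
  intro p
  have h0 := hr₁ i
  set q : EuclideanSpace ℝ (Fin d) := (r₁ i)⁻¹ • (p - c₁ i) with hq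
  have hball : ∀ j : Fin n₂,
      (p ∈ Metric.ball (c₁ i + r₁ i • c₂ j) (r₁ i * r₂ j)) ↔ q ∈ Metric.ball (c₂ j) (r₂ j) := by
    intro j
    simp only [Metric.mem_ball, dist_eq_norm, hq]
    rw [show (r₁ i)⁻¹ • (p - c₁ i) - c₂ j = (r₁ i)⁻¹ • (p - (c₁ i + r₁ i • c₂ j)) by
      rw [smul_sub, smul_sub, smul_add, smul_smul, inv_mul_cancel₀ h0.ne', one_smul]; abel]
    rw [norm_smul, norm_inv, Real.norm_eq_abs, abs_of_pos h0, inv_mul_lt_iff₀ h0]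
  have hdecomp : {x : {j : Fin n₁ // j ≠ i} ⊕ Fin n₂ |
        p ∈ Sum.elim (fun j : {j : Fin n₁ // j ≠ i} => Metric.ball (c₁ j.1) (r₁ j.1))
          (fun j : Fin n₂ => Metric.ball (c₁ i + r₁ i • c₂ j) (r₁ i * r₂ j)) x} =
      Sum.inl '' {j : {j : Fin n₁ // j ≠ i} | p ∈ Metric.ball (c₁ j.1) (r₁ j.1)} ∪
      Sum.inr '' {j : Fin n₂ | q ∈ Metric.ball (c₂ j) (r₂ j)} := by
    ext x
    cases x with
    | inl a => simp
    | inr b => simp [hball b]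
  rw [hdecomp]
  have h1 : (Sum.inl '' {j : {j : Fin n₁ // j ≠ i} | p ∈ Metric.ball (c₁ j.1) (r₁ j.1)} :
      Set ({j : Fin n₁ // j ≠ i} ⊕ Fin n₂)).ncard ≤ k₁ - 1 := by
    rw [Set.ncard_image_of_injective _ Sum.inl_injective]
    calc ({j : {j : Fin n₁ // j ≠ i} | p ∈ Metric.ball (c₁ j.1) (r₁ j.1)}).ncard
        = (Subtype.val '' {j : {j : Fin n₁ // j ≠ i} |
            p ∈ Metric.ball (c₁ j.1) (r₁ j.1)}).ncard :=
          (Set.ncard_image_of_injective _ Subtype.val_injective).symm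
      _ ≤ ({j : Fin n₁ | p ∈ Metric.ball (c₁ j) (r₁ j)}).ncard := by
          apply Set.ncard_le_ncard _ (Set.toFinite _)
          rintro x ⟨y, hy, rfl⟩
          exact hy
      _ ≤ k₁ - 1 := hov₁ p
  have h2 : (Sum.inr '' {j : Fin n₂ | q ∈ Metric.ball (c₂ j) (r₂ j)} :
      Set ({j : Fin n₁ // j ≠ i} ⊕ Fin n₂)).ncard ≤ k₂ - 1 := by
    rw [Set.ncard_image_of_injective _ Sum.inr_injective]
    exact hov₂ q
  calc _ ≤ _ + _ := Set.ncard_union_le _ _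
    _ ≤ (k₁ - 1) + (k₂ - 1) := Nat.add_le_add h1 h2
    _ ≤ k₁ + k₂ - 2 := by omega
end

section
/- With the filtration F_i O(n) := B_d^{(i+2)}(n) of the operad of overlapping discs, the operadic composition restricts to maps ∘_i : F_{k₁}O(n₁) × F_{k₂}O(n₂) → F_{k₁+k₂}O(n₁+n₂−1), i.e. the index of the filtration is additive under composition. -/
/-!
If `p` lies in the `i`-th outer disc, that disc is replaced by the inserted configuration:
`p` meets at most `k₁` of the remaining outer discs and, after rescaling the `i`-th disc to
the unit disc, at most `k₂ + 1` of the inserted ones. Otherwise `p` meets none of the inserted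
discs, which all lie inside the `i`-th one, and at most `k₁ + 1` outer discs.
-/

open Metric Set

-- A configuration of discs `B` lies in `B_d^{(k)}` iff `coverDepth B p < k` for every `p`.
noncomputable def coverDepth {ι X : Type*} (B : ι → Set X) (p : X) : ℕ :=
  {j | p ∈ B j}.ncard

section coverDepth

variable {ι κ X : Type*} (B : ι → Set X) (p : X)

theorem coverDepth_sumElim [Finite ι] [Finite κ] (C : κ → Set X) :
    coverDepth (Sum.elim B C) p = coverDepth B p + coverDepth C p := by
  have hsplit : {q | p ∈ Sum.elim B C q}
      = Sum.inl '' {j | p ∈ B j} ∪ Sum.inr '' {j | p ∈ C j} := by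
    ext (j | j) <;> simp
  rw [coverDepth, hsplit, ncard_union_eq disjoint_image_inl_image_inr,
    ncard_image_of_injective _ Sum.inl_injective, ncard_image_of_injective _ Sum.inr_injective]
  rfl

theorem coverDepth_subtype_ne (i : ι) :
    coverDepth (fun j : {j // j ≠ i} => B j) p = ({j | p ∈ B j} \ {i}).ncard := by
  rw [coverDepth, ← ncard_image_of_injective _ Subtype.val_injective]
  congr 1
  ext j
  simp [and_comm]

theorem coverDepth_eq_zero_of_notMem {S : Set X} (hB : ∀ j, B j ⊆ S) (hp : p ∉ S) :
    coverDepth B p = 0 := by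
  have hempty : {j | p ∈ B j} = ∅ := eq_empty_of_forall_notMem fun j hj => hp (hB j hj)
  rw [coverDepth, hempty, ncard_empty]

end coverDepth

theorem mem_ball_add_smul_iff {E : Type*} [NormedAddCommGroup E] [NormedSpace ℝ E] {r : ℝ}
    (hr : 0 < r) (c x p : E) (s : ℝ) :
    p ∈ ball (c + r • x) (r * s) ↔ r⁻¹ • (p - c) ∈ ball x s := by
  have hrescale : r⁻¹ • (p - c) - x = r⁻¹ • (p - (c + r • x)) := by
    rw [smul_sub, smul_sub, smul_add, smul_smul, inv_mul_cancel₀ hr.ne', one_smul]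
    abel
  rw [mem_ball_iff_norm, mem_ball_iff_norm, hrescale, norm_smul, Real.norm_eq_abs,
    abs_of_pos (inv_pos.mpr hr), inv_mul_lt_iff₀ hr]

theorem coverDepth_ball_add_smul {ι E : Type*} [NormedAddCommGroup E] [NormedSpace ℝ E] {r : ℝ}
    (hr : 0 < r) (c : E) (x : ι → E) (s : ι → ℝ) (p : E) :
    coverDepth (fun j => ball (c + r • x j) (r * s j)) p
      = coverDepth (fun j => ball (x j) (s j)) (r⁻¹ • (p - c)) := by
  simp only [coverDepth, mem_ball_add_smul_iff hr]

theorem stmt_8_general (d n₁ n₂ k₁ k₂ : ℕ) (i : Fin n₁)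
    (c₁ : Fin n₁ → EuclideanSpace ℝ (Fin d)) (r₁ : Fin n₁ → ℝ)
    (c₂ : Fin n₂ → EuclideanSpace ℝ (Fin d)) (r₂ : Fin n₂ → ℝ)
    (hr₁ : ∀ j, 0 < r₁ j)
    (hin₂ : ∀ j, Metric.ball (c₂ j) (r₂ j) ⊆ Metric.ball 0 1)
    (hov₁ : ∀ p : EuclideanSpace ℝ (Fin d),
      Set.ncard {j | p ∈ Metric.ball (c₁ j) (r₁ j)} ≤ k₁ + 1)
    (hov₂ : ∀ p : EuclideanSpace ℝ (Fin d),
      Set.ncard {j | p ∈ Metric.ball (c₂ j) (r₂ j)} ≤ k₂ + 1) :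
    ∀ p : EuclideanSpace ℝ (Fin d),
      Set.ncard {q : {j : Fin n₁ // j ≠ i} ⊕ Fin n₂ |
        p ∈ Sum.elim (fun j : {j : Fin n₁ // j ≠ i} => Metric.ball (c₁ j.1) (r₁ j.1))
          (fun j : Fin n₂ => Metric.ball (c₁ i + r₁ i • c₂ j) (r₁ i * r₂ j)) q}
      ≤ k₁ + k₂ + 1 := by
  intro p
  change coverDepth (Sum.elim _ _) p ≤ _
  rw [coverDepth_sumElim, coverDepth_subtype_ne (fun j => ball (c₁ j) (r₁ j)),
    coverDepth_ball_add_smul (hr₁ i)]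
  have hleft := hov₁ p
  by_cases hp : p ∈ ball (c₁ i) (r₁ i)
  · have hdrop := ncard_sdiff_singleton_add_one (s := {j | p ∈ ball (c₁ j) (r₁ j)}) hp
    have hright : coverDepth (fun j => ball (c₂ j) (r₂ j)) ((r₁ i)⁻¹ • (p - c₁ i)) ≤ k₂ + 1 :=
      hov₂ _
    omega
  · have hq : (r₁ i)⁻¹ • (p - c₁ i) ∉ ball 0 1 := by
      rwa [← mem_ball_add_smul_iff (hr₁ i), smul_zero, add_zero, mul_one]
    rw [coverDepth_eq_zero_of_notMem _ _ hin₂ hq]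
    have hdrop := ncard_sdiff_singleton_le {j | p ∈ ball (c₁ j) (r₁ j)} i
    omega

/-- additivity of the filtration `F_i O(n) := B_d^{(i+2)}(n)` under operadic
composition: inserting a non-`(k₂+2)`-overlapping configuration into the `i`-th disc of a
non-`(k₁+2)`-overlapping configuration yields a non-`(k₁+k₂+2)`-overlapping configuration,
i.e. every point lies in at most `k₁+k₂+1` of the resulting discs. -/
theorem stmt_8 (d n₁ n₂ k₁ k₂ : ℕ) (hd : 1 ≤ d) (i : Fin n₁)
    (c₁ : Fin n₁ → EuclideanSpace ℝ (Fin d)) (r₁ : Fin n₁ → ℝ)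
    (c₂ : Fin n₂ → EuclideanSpace ℝ (Fin d)) (r₂ : Fin n₂ → ℝ)
    (hr₁ : ∀ j, 0 < r₁ j) (hr₂ : ∀ j, 0 < r₂ j)
    (hin₁ : ∀ j, Metric.ball (c₁ j) (r₁ j) ⊆ Metric.ball 0 1)
    (hin₂ : ∀ j, Metric.ball (c₂ j) (r₂ j) ⊆ Metric.ball 0 1)
    (hov₁ : ∀ p : EuclideanSpace ℝ (Fin d),
      Set.ncard {j | p ∈ Metric.ball (c₁ j) (r₁ j)} ≤ k₁ + 1)
    (hov₂ : ∀ p : EuclideanSpace ℝ (Fin d),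
      Set.ncard {j | p ∈ Metric.ball (c₂ j) (r₂ j)} ≤ k₂ + 1) :
    ∀ p : EuclideanSpace ℝ (Fin d),
      Set.ncard {q : {j : Fin n₁ // j ≠ i} ⊕ Fin n₂ |
        p ∈ Sum.elim (fun j : {j : Fin n₁ // j ≠ i} => Metric.ball (c₁ j.1) (r₁ j.1))
          (fun j : Fin n₂ => Metric.ball (c₁ i + r₁ i • c₂ j) (r₁ i * r₂ j)) q}
      ≤ k₁ + k₂ + 1 :=
  stmt_8_general d n₁ n₂ k₁ k₂ i c₁ r₁ c₂ r₂ hr₁ hin₂ hov₁ hov₂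
end
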